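/- arXiv:2402.04795 — 2 statements merged into one kernel-verified Lean document; each statement's English description precedes it below -/
import Mathlib

section
/- Let ‖·‖ be a norm on ℝ^d, let A be a d×d real matrix, let m > 0 and h > 0 satisfy h²·‖A²‖ < 8, and set α = −(1/m)·ln(1 − h²‖A²‖/8), so α ≥ 0. Let z(t) = e^{tA} z₀ and suppose that ‖e^{mA}(e^{hA})^k z₀‖ ≤ ‖z₀‖ for every integer k ≥ 0. Then ‖z(t)‖ ≤ e^{α t} ‖z₀‖ for every t ≥ m. -/
/-- `N` is a norm on `ℝ^d`: subadditive, absolutely homogeneous, and definite. -/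
def IsNorm {d : ℕ} (N : (Fin d → ℝ) → ℝ) : Prop :=
  (∀ x y, N (x + y) ≤ N x + N y) ∧
  (∀ (c : ℝ) (x), N (c • x) = |c| * N x) ∧
  (∀ x, N x = 0 → x = 0)

/-- The operator norm of the matrix `M`, induced by the norm `N` on `ℝ^d`:
`sup { N (M x) : N x ≤ 1 }`. -/
noncomputable def opNorm {d : ℕ} (N : (Fin d → ℝ) → ℝ) (M : Matrix (Fin d) (Fin d) ℝ) : ℝ :=
  sSup {r : ℝ | ∃ x, N x ≤ 1 ∧ r = N (M.mulVec x)}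

/-!
On a grid cell `[a, a + h]` let `S` be the maximum of `N (z ·)`, attained at `τ`. Testing `z`
against a norming functional `ℓ` of `z τ` gives a real function `u = ℓ ∘ z` with
`u'' = ℓ (A² z) ≥ -‖A²‖ S`, so `u + ‖A²‖ S (· - a) (· - a - h) / 2` is convex and
`S = u τ ≤ max (u a) (u (a + h)) + ‖A²‖ S (τ - a) (a + h - τ) / 2 ≤ N z₀ + (h² ‖A²‖ / 8) S`,
since the grid hypothesis bounds `z` at both ends of the cell. Hence
`S ≤ N z₀ / (1 - h² ‖A²‖ / 8) = e^{α m} N z₀ ≤ e^{α t} N z₀`.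
-/

open Matrix NormedSpace Set

theorem le_max_add_of_neg_le_deriv2 {u u' u'' : ℝ → ℝ} {a b M t : ℝ}
    (hu : ContinuousOn u (Icc a b)) (hu' : ∀ x ∈ Ioo a b, HasDerivAt u (u' x) x)
    (hu'' : ∀ x ∈ Ioo a b, HasDerivAt u' (u'' x) x) (hM : ∀ x ∈ Ioo a b, -M ≤ u'' x)
    (ht : t ∈ Icc a b) :
    u t ≤ max (u a) (u b) + M * ((t - a) * (b - t)) / 2 := by
  have hv : ConvexOn ℝ (Icc a b) fun x => u x + M * ((x - a) * (x - b)) / 2 := by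
    refine convexOn_of_hasDerivWithinAt2_nonneg (convex_Icc a b)
      (f' := fun x => u' x + M * (2 * x - a - b) / 2) (f'' := fun x => u'' x + M)
      (hu.add (by fun_prop)) ?_ ?_ ?_ <;> rw [interior_Icc] <;> intro x hx
    · refine ((hu' x hx).add ?_).hasDerivWithinAt
      exact ((((hasDerivAt_id x).sub_const a).mul ((hasDerivAt_id x).sub_const b)).const_mul M
        |>.div_const 2).congr_deriv (by simp only [id]; ring)
    · refine ((hu'' x hx).add ?_).hasDerivWithinAt
      exact ((((hasDerivAt_id x).const_mul 2).sub_const a).sub_const b |>.const_mul M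
        |>.div_const 2).congr_deriv (by ring)
    · linarith [hM x hx]
  have hab : a ≤ b := ht.1.trans ht.2
  have := hv.le_on_segment (left_mem_Icc.2 hab) (right_mem_Icc.2 hab) (by rwa [segment_eq_Icc hab])
  simp only [sub_self, zero_mul, mul_zero, zero_div, add_zero] at this
  linarith

theorem norm_le_max_add_of_norm_deriv2_le {E : Type*} [NormedAddCommGroup E] [NormedSpace ℝ E]
    {f f' f'' : ℝ → E} {a b M t : ℝ}
    (hf : ContinuousOn f (Icc a b)) (hf' : ∀ x ∈ Ioo a b, HasDerivAt f (f' x) x)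
    (hf'' : ∀ x ∈ Ioo a b, HasDerivAt f' (f'' x) x) (hM : ∀ x ∈ Ioo a b, ‖f'' x‖ ≤ M)
    (ht : t ∈ Icc a b) :
    ‖f t‖ ≤ max ‖f a‖ ‖f b‖ + M * ((t - a) * (b - t)) / 2 := by
  obtain ⟨g, hg, hgt⟩ := exists_dual_vector'' ℝ (f t)
  have hg_abs (y : E) : |g y| ≤ ‖y‖ :=
    (g.le_opNorm y).trans (mul_le_of_le_one_left (norm_nonneg y) hg)
  have key := le_max_add_of_neg_le_deriv2 (u := fun x => g (f x)) (u' := fun x => g (f' x))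
    (u'' := fun x => g (f'' x)) (M := M) (g.continuous.comp_continuousOn hf)
    (fun x hx => g.hasFDerivAt.comp_hasDerivAt x (hf' x hx))
    (fun x hx => g.hasFDerivAt.comp_hasDerivAt x (hf'' x hx))
    (fun x hx => (neg_le_neg ((hg_abs _).trans (hM x hx))).trans (neg_abs_le _)) ht
  simp only [hgt] at key
  exact key.trans (by gcongr <;> exact (le_abs_self _).trans (hg_abs _))

theorem norm_le_div_of_norm_deriv2_le_mul_norm {E : Type*} [NormedAddCommGroup E]
    [NormedSpace ℝ E] {f f' f'' : ℝ → E} {a b K t : ℝ}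
    (hf : ContinuousOn f (Icc a b)) (hf' : ∀ x ∈ Ioo a b, HasDerivAt f (f' x) x)
    (hf'' : ∀ x ∈ Ioo a b, HasDerivAt f' (f'' x) x)
    (hK : ∀ x ∈ Ioo a b, ‖f'' x‖ ≤ K * ‖f x‖) (hK₀ : 0 ≤ K) (hK₈ : (b - a) ^ 2 * K < 8)
    (ht : t ∈ Icc a b) :
    ‖f t‖ ≤ max ‖f a‖ ‖f b‖ / (1 - (b - a) ^ 2 * K / 8) := by
  obtain ⟨τ, hτ, hmax⟩ := isCompact_Icc.exists_isMaxOn (nonempty_of_mem ht) hf.norm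
  set S := ‖f τ‖
  have hS : S ≤ max ‖f a‖ ‖f b‖ + K * S * ((τ - a) * (b - τ)) / 2 :=
    norm_le_max_add_of_norm_deriv2_le hf hf' hf'' (fun x hx =>
      (hK x hx).trans (mul_le_mul_of_nonneg_left (hmax (Ioo_subset_Icc_self hx)) hK₀)) hτ
  -- `(τ - a) * (b - τ) ≤ (b - a) ^ 2 / 4` by AM-GM
  have hS' : S * (1 - (b - a) ^ 2 * K / 8) ≤ max ‖f a‖ ‖f b‖ := by
    nlinarith [mul_nonneg (mul_nonneg hK₀ (norm_nonneg (f τ))) (sq_nonneg (2 * τ - a - b))]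
  rw [le_div_iff₀ (by linarith)]
  exact (mul_le_mul_of_nonneg_right (hmax ht) (by linarith)).trans hS'

theorem exists_nat_mem_Icc_add_mul {m h t : ℝ} (hh : 0 < h) (ht : m ≤ t) :
    ∃ k : ℕ, t ∈ Icc (m + k * h) (m + k * h + h) := by
  refine ⟨⌊(t - m) / h⌋₊, ?_, ?_⟩
  · have := Nat.floor_le (div_nonneg (sub_nonneg.2 ht) hh.le)
    rw [le_div_iff₀ hh] at this
    linarith
  · have := Nat.lt_floor_add_one ((t - m) / h)
    rw [div_lt_iff₀ hh] at this
    linarith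

section
attribute [local instance] Matrix.linftyOpNormedAddCommGroup Matrix.linftyOpNormedRing
  Matrix.linftyOpNormedAlgebra

theorem Matrix.hasDerivAt_exp_smul_mulVec {n : Type*} [Fintype n] [DecidableEq n]
    (A : Matrix n n ℝ) (v : n → ℝ) (t : ℝ) :
    HasDerivAt (fun s : ℝ => exp (s • A) *ᵥ v) (exp (t • A) *ᵥ (A *ᵥ v)) t := by
  rw [mulVec_mulVec]
  exact (LinearMap.toContinuousLinearMap ((mulVecBilin ℝ ℝ).flip v)).hasFDerivAt.comp_hasDerivAt
    t (hasDerivAt_exp_smul_const A t)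

end

theorem Matrix.exp_add_nat_mul_smul {n : Type*} [Fintype n] [DecidableEq n]
    (A : Matrix n n ℝ) (m h : ℝ) (k : ℕ) :
    exp ((m + k * h) • A) = exp (m • A) * exp (h • A) ^ k := by
  rw [add_smul, exp_add_of_commute _ _ ((Commute.refl A).smul_left m |>.smul_right _), mul_smul,
    Nat.cast_smul_eq_nsmul, exp_nsmul]

namespace IsNorm

variable {d : ℕ} {N : (Fin d → ℝ) → ℝ}

theorem map_zero (hN : IsNorm N) : N 0 = 0 := by
  simpa using hN.2.1 0 0

theorem map_neg (hN : IsNorm N) (x : Fin d → ℝ) : N (-x) = N x := by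
  simpa using hN.2.1 (-1) x

theorem nonneg (hN : IsNorm N) (x : Fin d → ℝ) : 0 ≤ N x := by
  have := hN.1 x (-x)
  rw [add_neg_cancel, hN.map_zero, hN.map_neg] at this
  linarith

end IsNorm

def WithNorm {d : ℕ} (_N : (Fin d → ℝ) → ℝ) : Type := Fin d → ℝ

namespace WithNorm

variable {d : ℕ} (N : (Fin d → ℝ) → ℝ)

instance : AddCommGroup (WithNorm N) := inferInstanceAs (AddCommGroup (Fin d → ℝ))

noncomputable instance : Module ℝ (WithNorm N) := inferInstanceAs (Module ℝ (Fin d → ℝ))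

variable [hN : Fact (IsNorm N)]

noncomputable instance : NormedAddCommGroup (WithNorm N) :=
  AddGroupNorm.toNormedAddCommGroup
    { toFun := N
      map_zero' := hN.out.map_zero
      add_le' := hN.out.1
      neg' := hN.out.map_neg
      eq_zero_of_map_eq_zero' := hN.out.2.2 }

noncomputable instance : NormedSpace ℝ (WithNorm N) where
  norm_smul_le c x := (hN.out.2.1 c x).le

instance : FiniteDimensional ℝ (WithNorm N) :=
  inferInstanceAs (FiniteDimensional ℝ (Fin d → ℝ))

noncomputable def equiv : (Fin d → ℝ) ≃L[ℝ] WithNorm N :=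
  (show (Fin d → ℝ) ≃ₗ[ℝ] WithNorm N from LinearEquiv.refl ℝ _).toContinuousLinearEquiv

@[simp] theorem norm_equiv (x : Fin d → ℝ) : ‖equiv N x‖ = N x := rfl

noncomputable def mulVecCLM (M : Matrix (Fin d) (Fin d) ℝ) : WithNorm N →L[ℝ] WithNorm N :=
  LinearMap.toContinuousLinearMap (Matrix.toLin' M)

theorem opNorm_eq_norm_mulVecCLM (M : Matrix (Fin d) (Fin d) ℝ) :
    opNorm N M = ‖mulVecCLM N M‖ := by
  rw [← (mulVecCLM N M).sSup_unitClosedBall_eq_norm, opNorm]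
  congr 1
  ext r
  simp only [mem_ofPred_eq, mem_image, mem_closedBall_zero_iff]
  exact ⟨fun ⟨x, hx, hr⟩ => ⟨x, hx, hr.symm⟩, fun ⟨x, hx, hr⟩ => ⟨x, hx, hr.symm⟩⟩

end WithNorm

namespace IsNorm

variable {d : ℕ} {N : (Fin d → ℝ) → ℝ}

theorem opNorm_nonneg (hN : IsNorm N) (M : Matrix (Fin d) (Fin d) ℝ) : 0 ≤ opNorm N M := by
  have : Fact (IsNorm N) := ⟨hN⟩
  rw [WithNorm.opNorm_eq_norm_mulVecCLM]
  exact norm_nonneg _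

theorem apply_mulVec_le (hN : IsNorm N) (M : Matrix (Fin d) (Fin d) ℝ) (x : Fin d → ℝ) :
    N (M *ᵥ x) ≤ opNorm N M * N x := by
  have : Fact (IsNorm N) := ⟨hN⟩
  rw [WithNorm.opNorm_eq_norm_mulVecCLM]
  exact (WithNorm.mulVecCLM N M).le_opNorm (WithNorm.equiv N x)

theorem apply_exp_smul_mulVec_le (hN : IsNorm N) (A : Matrix (Fin d) (Fin d) ℝ)
    (z₀ : Fin d → ℝ) {a h t : ℝ} (hK : h ^ 2 * opNorm N (A * A) < 8) (ht : t ∈ Icc a (a + h)) :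
    N (exp (t • A) *ᵥ z₀) ≤
      max (N (exp (a • A) *ᵥ z₀)) (N (exp ((a + h) • A) *ᵥ z₀)) /
        (1 - h ^ 2 * opNorm N (A * A) / 8) := by
  have : Fact (IsNorm N) := ⟨hN⟩
  have hderiv (v : Fin d → ℝ) (s : ℝ) :
      HasDerivAt (fun s => WithNorm.equiv N (exp (s • A) *ᵥ v))
        (WithNorm.equiv N (exp (s • A) *ᵥ (A *ᵥ v))) s :=
    (WithNorm.equiv N).hasFDerivAt.comp_hasDerivAt s (hasDerivAt_exp_smul_mulVec A v s)
  have hderiv2_le (s : ℝ) :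
      N (exp (s • A) *ᵥ (A *ᵥ (A *ᵥ z₀))) ≤ opNorm N (A * A) * N (exp (s • A) *ᵥ z₀) := by
    have hcomm : Commute (A * A) (exp (s • A)) :=
      (((Commute.refl A).mul_left (Commute.refl A)).smul_right s).exp_right
    rw [mulVec_mulVec, mulVec_mulVec, mul_assoc, ← hcomm.eq, ← mulVec_mulVec]
    exact hN.apply_mulVec_le _ _
  simpa only [add_sub_cancel_left, WithNorm.norm_equiv] using
    norm_le_div_of_norm_deriv2_le_mul_norm (f := fun s => WithNorm.equiv N (exp (s • A) *ᵥ z₀))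
      (fun s _ => (hderiv z₀ s).continuousAt.continuousWithinAt) (fun s _ => hderiv z₀ s)
      (fun s _ => hderiv (A *ᵥ z₀) s) (fun s _ => hderiv2_le s) (hN.opNorm_nonneg _)
      (by rwa [add_sub_cancel_left]) ht

end IsNorm

/-- **Single-mode estimate.** Let `N` be a norm on `ℝ^d`, `A` a `d×d` real matrix,
`m > 0`, `h > 0` with `h²·‖A²‖ < 8`, and set `α = −(1/m)·ln(1 − h²‖A²‖/8)`, so `α ≥ 0`.
If `z t = e^{tA} z₀` and `N (e^{mA} (e^{hA})^k z₀) ≤ N z₀` for every `k : ℕ`, then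
`N (z t) ≤ e^{α t} N z₀` for every `t ≥ m`. -/
theorem single_mode_estimate {d : ℕ} (N : (Fin d → ℝ) → ℝ) (hN : IsNorm N)
    (A : Matrix (Fin d) (Fin d) ℝ) (m h : ℝ) (hm : 0 < m) (hh : 0 < h)
    (hA : h ^ 2 * opNorm N (A * A) < 8)
    (α : ℝ) (hα : α = -(1 / m) * Real.log (1 - h ^ 2 * opNorm N (A * A) / 8))
    (z₀ : Fin d → ℝ) (z : ℝ → (Fin d → ℝ))
    (hz : ∀ t : ℝ, z t = (NormedSpace.exp (t • A)).mulVec z₀)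
    (hgrid : ∀ k : ℕ,
      N ((NormedSpace.exp (m • A) * (NormedSpace.exp (h • A)) ^ k).mulVec z₀) ≤ N z₀) :
    0 ≤ α ∧ ∀ t : ℝ, m ≤ t → N (z t) ≤ Real.exp (α * t) * N z₀ := by
  set q := h ^ 2 * opNorm N (A * A) / 8 with hq
  have hq₀ : 0 ≤ q := by have := hN.opNorm_nonneg (A * A); positivity
  have hq₁ : 0 < 1 - q := by linarith
  have hexp_αm : Real.exp (α * m) = (1 - q)⁻¹ := by
    rw [hα, show -(1 / m) * Real.log (1 - q) * m = -Real.log (1 - q) by field_simp,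
      Real.exp_neg, Real.exp_log hq₁]
  have hα₀ : 0 ≤ α := by
    rw [hα, neg_mul]
    exact neg_nonneg.2 (mul_nonpos_of_nonneg_of_nonpos (by positivity)
      (Real.log_nonpos hq₁.le (by linarith)))
  refine ⟨hα₀, fun t ht => ?_⟩
  obtain ⟨k, hk⟩ := exists_nat_mem_Icc_add_mul hh ht
  have hgrid' (j : ℕ) : N (exp ((m + j * h) • A) *ᵥ z₀) ≤ N z₀ := by
    rw [exp_add_nat_mul_smul]; exact hgrid j
  have hk_succ : m + k * h + h = m + (k + 1 : ℕ) * h := by push_cast; ring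
  calc N (z t)
      ≤ max (N (exp ((m + k * h) • A) *ᵥ z₀)) (N (exp ((m + k * h + h) • A) *ᵥ z₀)) / (1 - q) := by
        rw [hz]; exact hN.apply_exp_smul_mulVec_le A z₀ hA hk
    _ ≤ N z₀ / (1 - q) := by
        rw [hk_succ]; gcongr; exact max_le (hgrid' k) (hgrid' (k + 1))
    _ = Real.exp (α * m) * N z₀ := by rw [hexp_αm, div_eq_inv_mul]
    _ ≤ Real.exp (α * t) * N z₀ := by gcongr; exact hN.nonneg z₀
end

section
/- Let A₁,…,A_n be d×d real matrices, m > 0 and h > 0. Suppose there exists a cyclic admissible Markovian product Π of the h-discretization whose spectral radius satisfies ρ(Π) > 1. Then there exists a trajectory x of the switched system for {A₁,…,A_n} with dwell time at least m that is unbounded: sup_{t ≥ 0} ‖x(t)‖ = ∞. -/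
open scoped ENNReal

/-- `x : ℝ → ℝ^d` is a trajectory of the switched system for the matrices `A j` with dwell
time at least `m`: there are switching times `0 = t 0 < t 1 < ⋯` (a finite or infinite
strictly increasing sequence, consecutive gaps at least `m`, tending to `∞` if infinite,
the last interval being `[t N, ∞)` if finite) and modes `j 0, j 1, …` with
`j (k+1) ≠ j k`, such that on each switching interval
`x s = e^{(s − t k) A (j k)} (x (t k))`. -/
def IsDwellTrajectory {d n : ℕ} (A : Fin n → Matrix (Fin d) (Fin d) ℝ) (m : ℝ)
    (x : ℝ → (Fin d → ℝ)) : Prop :=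
  (∃ (N : ℕ) (t : ℕ → ℝ) (j : ℕ → Fin n),
    t 0 = 0 ∧
    (∀ k < N, m ≤ t (k + 1) - t k) ∧
    (∀ k < N, j (k + 1) ≠ j k) ∧
    (∀ k < N, ∀ s ∈ Set.Icc (t k) (t (k + 1)),
      x s = (NormedSpace.exp ((s - t k) • A (j k))).mulVec (x (t k))) ∧
    (∀ s : ℝ, t N ≤ s →
      x s = (NormedSpace.exp ((s - t N) • A (j N))).mulVec (x (t N)))) ∨
  (∃ (t : ℕ → ℝ) (j : ℕ → Fin n),
    t 0 = 0 ∧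
    (∀ k : ℕ, m ≤ t (k + 1) - t k) ∧
    Filter.Tendsto t Filter.atTop Filter.atTop ∧
    (∀ k : ℕ, j (k + 1) ≠ j k) ∧
    (∀ k : ℕ, ∀ s ∈ Set.Icc (t k) (t (k + 1)),
      x s = (NormedSpace.exp ((s - t k) • A (j k))).mulVec (x (t k))))

/-- The admissible Markovian product of the `h`-discretization determined by the modes
`j 0, …, j (p-1)` and the exponents `N 0, …, N (p-1)`:
`Π = (e^{hA_{j_{p-1}}})^{N_{p-1}} e^{mA_{j_{p-1}}} ⋯ (e^{hA_{j_0}})^{N_0} e^{mA_{j_0}}`. -/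
noncomputable def markovProd {d n : ℕ} (A : Fin n → Matrix (Fin d) (Fin d) ℝ) (m h : ℝ)
    (j : ℕ → Fin n) (N : ℕ → ℕ) (p : ℕ) : Matrix (Fin d) (Fin d) ℝ :=
  (((List.range p).map fun s =>
    (NormedSpace.exp (h • A (j s))) ^ (N s) * NormedSpace.exp (m • A (j s))).reverse).prod


/-!
An eigenvalue of modulus greater than one of `Π` yields a real vector `w` (the real or the
imaginary part of an eigenvector) whose orbit `Π ^ k w` is unbounded. Running the modes
`j 0, …, j (p - 1)` cyclically, mode `j s` for time `m + N s * h`, is a trajectory with dwell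
time at least `m`, and cyclicity makes consecutive modes differ also across period boundaries.
This trajectory passes through `Π ^ k w` after `k` periods. For `p = 1` no switch is possible,
and the single mode `j 0` is kept forever instead.
-/

open Matrix NormedSpace Filter Finset

lemma exists_mem_spectrum_one_lt_norm {𝕜 A : Type*} [NormedField 𝕜] [Ring A] [Algebra 𝕜 A]
    {a : A} (ha : 1 < spectralRadius 𝕜 a) : ∃ μ ∈ spectrum 𝕜 a, 1 < ‖μ‖ := by
  simp only [spectralRadius, lt_iSup_iff] at ha
  obtain ⟨μ, hμ, h1⟩ := ha
  exact ⟨μ, hμ, by exact_mod_cast h1⟩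

namespace Matrix

variable {ι : Type*} [Fintype ι]

lemma map_ofReal_mulVec_apply (X : Matrix ι ι ℝ) (v : ι → ℂ) (i : ι) :
    (X.map (algebraMap ℝ ℂ) *ᵥ v) i =
      ⟨(X *ᵥ fun l => (v l).re) i, (X *ᵥ fun l => (v l).im) i⟩ := by
  apply Complex.ext <;>
    simp [mulVec, dotProduct, Complex.re_sum, Complex.im_sum, Complex.mul_re, Complex.mul_im]

lemma norm_map_ofReal_mulVec_apply_le (X : Matrix ι ι ℝ) (v : ι → ℂ) (i : ι) :
    ‖(X.map (algebraMap ℝ ℂ) *ᵥ v) i‖ ≤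
      ‖X *ᵥ fun l => (v l).re‖ + ‖X *ᵥ fun l => (v l).im‖ := by
  rw [map_ofReal_mulVec_apply]
  refine (Complex.norm_le_abs_re_add_abs_im _).trans (add_le_add ?_ ?_)
  · exact norm_le_pi_norm (X *ᵥ fun l => (v l).re) i
  · exact norm_le_pi_norm (X *ᵥ fun l => (v l).im) i

variable [DecidableEq ι]

lemma exists_mulVec_eq_smul_of_mem_spectrum {K : Type*} [Field K] {B : Matrix ι ι K} {μ : K}
    (hμ : μ ∈ spectrum K B) : ∃ v ≠ 0, B *ᵥ v = μ • v := by
  rw [← spectrum_toLin', ← Module.End.hasEigenvalue_iff_mem_spectrum] at hμ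
  obtain ⟨v, hv, hv0⟩ := hμ.exists_hasEigenvector
  exact ⟨v, hv0, by simpa using Module.End.mem_eigenspace_iff.1 hv⟩

lemma pow_mulVec_of_mulVec_eq_smul {R : Type*} [CommRing R] {B : Matrix ι ι R} {μ : R}
    {v : ι → R} (hv : B *ᵥ v = μ • v) (k : ℕ) : (B ^ k) *ᵥ v = μ ^ k • v := by
  induction k with
  | zero => simp
  | succ k ih => rw [pow_succ', ← mulVec_mulVec, ih, mulVec_smul, hv, smul_smul, ← pow_succ]

theorem exists_unbounded_pow_mulVec_of_one_lt_spectralRadius {M : Matrix ι ι ℝ}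
    (hM : 1 < spectralRadius ℂ (M.map (algebraMap ℝ ℂ))) :
    ∃ w : ι → ℝ, ∀ C : ℝ, ∃ k : ℕ, C < ‖(M ^ k) *ᵥ w‖ := by
  obtain ⟨μ, hμ, hμ1⟩ := exists_mem_spectrum_one_lt_norm hM
  obtain ⟨v, hv0, hv⟩ := exists_mulVec_eq_smul_of_mem_spectrum hμ
  obtain ⟨i, hi⟩ := Function.ne_iff.1 hv0
  have growth (k : ℕ) : ‖μ‖ ^ k * ‖v i‖
      ≤ ‖(M ^ k) *ᵥ fun l => (v l).re‖ + ‖(M ^ k) *ᵥ fun l => (v l).im‖ := by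
    have hk : ‖((M ^ k).map (algebraMap ℝ ℂ) *ᵥ v) i‖ = ‖μ‖ ^ k * ‖v i‖ := by
      rw [Matrix.map_pow, pow_mulVec_of_mulVec_eq_smul hv]
      simp
    exact hk ▸ norm_map_ofReal_mulVec_apply_le _ v i
  by_contra! hbdd
  obtain ⟨C₁, hC₁⟩ := hbdd fun l => (v l).re
  obtain ⟨C₂, hC₂⟩ := hbdd fun l => (v l).im
  have hvi : 0 < ‖v i‖ := norm_pos_iff.2 hi
  obtain ⟨k, hk⟩ := ((tendsto_pow_atTop_atTop_of_one_lt hμ1).eventually_gt_atTop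
    ((C₁ + C₂) / ‖v i‖)).exists
  rw [div_lt_iff₀ hvi] at hk
  linarith [growth k, hC₁ k, hC₂ k]

lemma exp_smul_add_smul (M : Matrix ι ι ℝ) (a b : ℝ) :
    exp ((a + b) • M) = exp (a • M) * exp (b • M) := by
  rw [add_smul]
  exact exp_add_of_commute _ _ (((Commute.refl M).smul_left a).smul_right b)

lemma exp_smul_pow (M : Matrix ι ι ℝ) (c : ℝ) (k : ℕ) :
    exp (c • M) ^ k = exp (((k : ℝ) * c) • M) := by
  rw [← exp_nsmul, ← Nat.cast_smul_eq_nsmul ℝ, smul_smul]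

lemma exp_smul_pow_mul_exp_smul (M : Matrix ι ι ℝ) (a b : ℝ) (k : ℕ) :
    exp (a • M) ^ k * exp (b • M) = exp ((b + k * a) • M) := by
  rw [exp_smul_pow, ← exp_smul_add_smul, add_comm]

end Matrix

lemma List.prod_reverse_map_range_mul_of_periodic {M : Type*} [Monoid M] {f : ℕ → M} {p : ℕ}
    (hf : Function.Periodic f p) (k : ℕ) :
    ((List.range (k * p)).map f).reverse.prod = ((List.range p).map f).reverse.prod ^ k := by
  induction k with
  | zero => simp
  | succ k ih =>
    have hshift : (List.range p).map (fun i => f (k * p + i)) = (List.range p).map f :=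
      List.map_congr_left fun i _ => by rw [add_comm]; exact hf.nat_mul k i
    rw [Nat.succ_mul, List.range_add, List.map_append, List.map_map, Function.comp_def, hshift,
      List.reverse_append, List.prod_append, ih, pow_succ']

noncomputable def switchingTime (τ : ℕ → ℝ) (k : ℕ) : ℝ := ∑ i ∈ range k, τ i

/-- The index `k` of the switching interval `[t k, t (k + 1))` containing `s`. -/
noncomputable def switchIndex (t : ℕ → ℝ) (s : ℝ) : ℕ := by
  classical exact if h : ∃ k, s < t (k + 1) then Nat.find h else 0

lemma switchIndex_eq {t : ℕ → ℝ} (ht : Monotone t) {k : ℕ} {s : ℝ} (h₁ : t k ≤ s)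
    (h₂ : s < t (k + 1)) : switchIndex t s = k := by
  classical
  rw [switchIndex, dif_pos ⟨k, h₂⟩, Nat.find_eq_iff]
  exact ⟨h₂, fun q hq hlt => hlt.not_ge ((ht (Nat.succ_le_of_lt hq)).trans h₁)⟩

section SwitchedFlow

variable {d n : ℕ} (A : Fin n → Matrix (Fin d) (Fin d) ℝ) (τ : ℕ → ℝ) (J : ℕ → Fin n)

noncomputable def transitionMatrix (k : ℕ) : Matrix (Fin d) (Fin d) ℝ :=
  ((List.range k).map fun i => exp (τ i • A (J i))).reverse.prod

/-- Mode `J k` is active for the time `τ k` on the `k`-th switching interval. -/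
noncomputable def switchedFlow (w : Fin d → ℝ) (s : ℝ) : Fin d → ℝ :=
  let k := switchIndex (switchingTime τ) s
  exp ((s - switchingTime τ k) • A (J k)) *ᵥ (transitionMatrix A τ J k *ᵥ w)

variable {τ}

lemma switchingTime_succ (k : ℕ) : switchingTime τ (k + 1) = switchingTime τ k + τ k :=
  sum_range_succ τ k

lemma strictMono_switchingTime (hτ : ∀ k, 0 < τ k) : StrictMono (switchingTime τ) :=
  strictMono_nat_of_lt_succ fun k => by rw [switchingTime_succ]; linarith [hτ k]

lemma tendsto_switchingTime_atTop {m : ℝ} (hm : 0 < m) (hτ : ∀ k, m ≤ τ k) :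
    Tendsto (switchingTime τ) atTop atTop := by
  refine tendsto_atTop_mono (fun k => ?_) (tendsto_natCast_atTop_atTop.atTop_mul_const hm)
  simpa [switchingTime] using sum_le_sum fun i (_ : i ∈ range k) => hτ i

lemma transitionMatrix_succ (k : ℕ) :
    transitionMatrix A τ J (k + 1) = exp (τ k • A (J k)) * transitionMatrix A τ J k := by
  simp [transitionMatrix, List.range_succ]

lemma switchedFlow_eq_of_mem_Icc (hτ : ∀ k, 0 < τ k) (w : Fin d → ℝ) {k : ℕ} {s : ℝ}
    (hs : s ∈ Set.Icc (switchingTime τ k) (switchingTime τ (k + 1))) :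
    switchedFlow A τ J w s = exp ((s - switchingTime τ k) • A (J k)) *ᵥ
      (transitionMatrix A τ J k *ᵥ w) := by
  have ht := (strictMono_switchingTime hτ).monotone
  rcases hs.2.lt_or_eq with hlt | rfl
  · simp only [switchedFlow, switchIndex_eq ht hs.1 hlt]
  · have hk : switchIndex (switchingTime τ) (switchingTime τ (k + 1)) = k + 1 :=
      switchIndex_eq ht le_rfl (strictMono_switchingTime hτ (Nat.lt_succ_self _))
    simp only [switchedFlow, hk]
    rw [sub_self, zero_smul, exp_zero, one_mulVec, transitionMatrix_succ, switchingTime_succ,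
      add_sub_cancel_left, mulVec_mulVec]

lemma switchedFlow_switchingTime (hτ : ∀ k, 0 < τ k) (w : Fin d → ℝ) (k : ℕ) :
    switchedFlow A τ J w (switchingTime τ k) = transitionMatrix A τ J k *ᵥ w := by
  rw [switchedFlow_eq_of_mem_Icc A J hτ w
      ⟨le_rfl, (strictMono_switchingTime hτ).monotone k.le_succ⟩,
    sub_self, zero_smul, exp_zero, one_mulVec]

lemma isDwellTrajectory_switchedFlow {m : ℝ} (hm : 0 < m) (hτ : ∀ k, m ≤ τ k)
    (hJ : ∀ k, J (k + 1) ≠ J k) (w : Fin d → ℝ) :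
    IsDwellTrajectory A m (switchedFlow A τ J w) := by
  have hτ₀ k : 0 < τ k := hm.trans_le (hτ k)
  refine Or.inr ⟨switchingTime τ, J, sum_range_zero τ, fun k => ?_,
    tendsto_switchingTime_atTop hm hτ, hJ, fun k s hs => ?_⟩
  · rw [switchingTime_succ]; linarith [hτ k]
  · rw [switchedFlow_eq_of_mem_Icc A J hτ₀ w hs, switchedFlow_switchingTime A J hτ₀]

lemma isDwellTrajectory_exp_smul_mulVec (m : ℝ) (i : Fin n) (w : Fin d → ℝ) :
    IsDwellTrajectory A m fun s => exp (s • A i) *ᵥ w :=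
  Or.inl ⟨0, fun _ => 0, fun _ => i, rfl, by simp, by simp, by simp, fun s _ => by simp⟩

end SwitchedFlow

section Markov

variable {d n : ℕ} (A : Fin n → Matrix (Fin d) (Fin d) ℝ) (m h : ℝ) (j : ℕ → Fin n)
  (N : ℕ → ℕ) (p : ℕ)

lemma transitionMatrix_mod_mul (k : ℕ) :
    transitionMatrix A (fun i => m + N (i % p) * h) (fun i => j (i % p)) (k * p)
      = markovProd A m h j N p ^ k := by
  rw [transitionMatrix, List.prod_reverse_map_range_mul_of_periodic
    (fun i => by simp only [Nat.add_mod_right]) k, markovProd]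
  congr 3
  refine List.map_congr_left fun i hi => ?_
  rw [Nat.mod_eq_of_lt (List.mem_range.1 hi), exp_smul_pow_mul_exp_smul]

lemma markovProd_one : markovProd A m h j N 1 = exp ((m + N 0 * h) • A (j 0)) := by
  simp [markovProd, exp_smul_pow_mul_exp_smul]

variable {j p}

lemma apply_mod_succ_ne_apply_mod (hp : 1 < p) (hadm : ∀ s, s + 1 < p → j (s + 1) ≠ j s)
    (hcyc : j (p - 1) ≠ j 0) (k : ℕ) : j ((k + 1) % p) ≠ j (k % p) := by
  have hk := Nat.mod_lt k (by omega : 0 < p)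
  rw [Nat.add_mod, Nat.mod_eq_of_lt hp]
  rcases (show k % p + 1 ≤ p from hk).lt_or_eq with hlt | heq
  · rw [Nat.mod_eq_of_lt hlt]
    exact hadm _ hlt
  · rw [heq, Nat.mod_self, (by omega : k % p = p - 1)]
    exact hcyc.symm

theorem exists_isDwellTrajectory_eq_markovProd_pow_mulVec (hm : 0 < m) (hh : 0 < h)
    (hp : 0 < p) (hadm : ∀ s, s + 1 < p → j (s + 1) ≠ j s)
    (hcyc : p = 1 ∨ j (p - 1) ≠ j 0) (w : Fin d → ℝ) :
    ∃ x : ℝ → (Fin d → ℝ), IsDwellTrajectory A m x ∧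
      ∀ k : ℕ, ∃ s, 0 ≤ s ∧ x s = markovProd A m h j N p ^ k *ᵥ w := by
  have hdwell (i : ℕ) : m ≤ m + N i * h := le_add_of_nonneg_right (by positivity)
  rcases eq_or_ne p 1 with rfl | hp1
  · refine ⟨_, isDwellTrajectory_exp_smul_mulVec A m (j 0) w,
      fun k => ⟨k * (m + N 0 * h), by positivity, ?_⟩⟩
    rw [markovProd_one, exp_smul_pow]
  · have hmodes := apply_mod_succ_ne_apply_mod (by omega) hadm (hcyc.resolve_left hp1)
    refine ⟨_, isDwellTrajectory_switchedFlow A (fun i => j (i % p)) hm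
      (fun i => hdwell (i % p)) hmodes w,
      fun k => ⟨switchingTime (fun i => m + N (i % p) * h) (k * p), ?_, ?_⟩⟩
    · exact sum_nonneg fun i _ => hm.le.trans (hdwell _)
    · rw [switchedFlow_switchingTime A _ (fun i => hm.trans_le (hdwell _)),
        transitionMatrix_mod_mul]

end Markov

/-- **Instability direction of Corollary 2.**  If some cyclic admissible Markovian product
`Π` of the `h`-discretization has spectral radius `ρ(Π) > 1`, then the switched system
with dwell time at least `m` has an unbounded trajectory. -/
theorem unstable_of_markov_product_spectralRadius_gt_one {d n : ℕ}
    (A : Fin n → Matrix (Fin d) (Fin d) ℝ) (m h : ℝ) (hm : 0 < m) (hh : 0 < h)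
    (p : ℕ) (hp : 0 < p) (j : ℕ → Fin n) (N : ℕ → ℕ)
    (hadm : ∀ s : ℕ, s + 1 < p → j (s + 1) ≠ j s)
    (hcyc : p = 1 ∨ j (p - 1) ≠ j 0)
    (hρ : 1 < spectralRadius ℂ ((markovProd A m h j N p).map (algebraMap ℝ ℂ))) :
    ∃ x : ℝ → (Fin d → ℝ), IsDwellTrajectory A m x ∧
      ∀ C : ℝ, ∃ s : ℝ, 0 ≤ s ∧ C < ‖x s‖ := by
  obtain ⟨w, hw⟩ := exists_unbounded_pow_mulVec_of_one_lt_spectralRadius hρ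
  obtain ⟨x, hx, horbit⟩ :=
    exists_isDwellTrajectory_eq_markovProd_pow_mulVec A m h N hm hh hp hadm hcyc w
  refine ⟨x, hx, fun C => ?_⟩
  obtain ⟨k, hk⟩ := hw C
  obtain ⟨s, hs, hxs⟩ := horbit k
  exact ⟨s, hs, hxs ▸ hk⟩
end
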